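/- Let $1<\gamma<4$ and let $(a_n)_{n\ge 1}$ be a sequence of non-negative real numbers such that $a_{n+m}\le a_n a_m$ for all $n,m\ge 1$ and $a_{4n}\le n\, a_n^{\gamma}$ for all $n\ge 1$. Then for every $\tau > \log_4(\gamma)$ there exists a constant $C>0$ such that $a_n \le C e^{n^{\tau}}$ for all $n\ge 1$. -/
import Mathlib

open Filter

/-- Auxiliary: the result for sequences bounded below by 1. -/
theorem aux_grow (γ : ℝ) (hγ1 : 1 < γ) (b : ℕ → ℝ)
    (hb1 : ∀ n, 1 ≤ b n)
    (hbsub : ∀ n m, 1 ≤ n → 1 ≤ m → b (n + m) ≤ b n * b m)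
    (hb4 : ∀ n, 1 ≤ n → b (4 * n) ≤ (n : ℝ) * b n ^ γ) :
    ∀ τ : ℝ, Real.log γ / Real.log 4 < τ →
      ∃ C > 0, ∀ n, 1 ≤ n → b n ≤ C * Real.exp ((n : ℝ) ^ τ) := by
  intro τ hτ
  have hγ0 : (0:ℝ) < γ := lt_trans one_pos hγ1
  have hγ1' : (0:ℝ) < γ - 1 := by linarith
  have hlog4 : 0 < Real.log 4 := Real.log_pos (by norm_num)
  set α := Real.log γ / Real.log 4 with hα
  have hα0 : 0 ≤ α := div_nonneg (Real.log_nonneg hγ1.le) hlog4.le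
  have hb0 : ∀ n, (0:ℝ) < b n := fun n => lt_of_lt_of_le one_pos (hb1 n)
  -- iterated submultiplicativity
  have hbpow : ∀ d m, 1 ≤ d → 1 ≤ m → b (d * m) ≤ b m ^ d := by
    intro d
    induction d with
    | zero => intro m h; omega
    | succ d ih =>
      intro m _ hm
      rcases Nat.eq_zero_or_pos d with hd | hd
      · subst hd; simpa using le_refl (b m)
      · have h1 : (d+1)*m = d*m + m := by ring
        rw [h1, pow_succ]
        exact le_trans (hbsub _ _ (Nat.mul_pos hd hm) hm)
          (mul_le_mul_of_nonneg_right (ih m hd hm) (hb0 m).le)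
  obtain ⟨B, hBpos, hB1⟩ : ∃ B : ℝ, 0 < B ∧ (γ - 1) * B = Real.log 4 :=
    ⟨Real.log 4 / (γ - 1), div_pos hlog4 hγ1', by field_simp⟩
  obtain ⟨D, hDpos, hD1⟩ : ∃ D : ℝ, 0 < D ∧ (γ - 1) * D = B :=
    ⟨B / (γ - 1), div_pos hBpos hγ1', by field_simp⟩
  have hlogb1 : 0 ≤ Real.log (b 1) := Real.log_nonneg (hb1 1)
  obtain ⟨A, hApos, hAdef⟩ : ∃ A : ℝ, 0 < A ∧ A = Real.log (b 1) + D :=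
    ⟨Real.log (b 1) + D, by linarith, rfl⟩
  -- bound along powers of 4
  have key : ∀ k : ℕ, b (4 ^ k) ≤ Real.exp (A * γ ^ k - B * k - D) := by
    intro k
    induction k with
    | zero =>
      have : A * γ ^ 0 - B * (0:ℕ) - D = Real.log (b 1) := by
        rw [hAdef]; push_cast; ring
      rw [pow_zero, this, Real.exp_log (hb0 1)]
    | succ k ih =>
      have h4k : (1:ℕ) ≤ 4 ^ k := Nat.one_le_pow _ _ (by norm_num)
      have h1 : b (4 ^ (k+1)) ≤ ((4:ℝ) ^ k) * b (4 ^ k) ^ γ := by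
        have := hb4 (4 ^ k) h4k
        rw [show 4 ^ (k+1) = 4 * 4 ^ k from by ring]
        convert this using 2
        push_cast; ring
      have h2 : b (4 ^ k) ^ γ ≤ Real.exp (γ * (A * γ ^ k - B * k - D)) := by
        calc b (4 ^ k) ^ γ ≤ (Real.exp (A * γ ^ k - B * k - D)) ^ γ :=
              Real.rpow_le_rpow (hb0 _).le ih hγ0.le
          _ = Real.exp (γ * (A * γ ^ k - B * k - D)) := by
              rw [Real.rpow_def_of_pos (Real.exp_pos _), Real.log_exp, mul_comm]
      have h3 : ((4:ℝ) ^ k) = Real.exp ((k : ℝ) * Real.log 4) := by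
        rw [Real.exp_nat_mul, Real.exp_log (by norm_num : (0:ℝ) < 4)]
      calc b (4 ^ (k+1)) ≤ ((4:ℝ) ^ k) * b (4 ^ k) ^ γ := h1
        _ ≤ Real.exp ((k : ℝ) * Real.log 4) * Real.exp (γ * (A * γ ^ k - B * k - D)) := by
            rw [← h3]
            exact mul_le_mul_of_nonneg_left h2 (by positivity)
        _ = Real.exp ((k : ℝ) * Real.log 4 + γ * (A * γ ^ k - B * k - D)) := by
            rw [← Real.exp_add]
        _ ≤ Real.exp (A * γ ^ (k+1) - B * (k+1 : ℕ) - D) := by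
            apply Real.exp_le_exp.2
            apply le_of_eq
            rw [pow_succ]
            push_cast
            linear_combination (-(k:ℝ)) * hB1 - hD1
  have key' : ∀ k : ℕ, b (4 ^ k) ≤ Real.exp (A * γ ^ k) := by
    intro k
    refine le_trans (key k) (Real.exp_le_exp.2 ?_)
    have : (0:ℝ) ≤ B * k := by positivity
    linarith
  obtain ⟨E, hEpos, hE1⟩ : ∃ E : ℝ, 0 < E ∧ (γ - 1) * E = 3 * A * γ :=
    ⟨3 * A * γ / (γ - 1), by positivity, by field_simp⟩
  have hE3A : 3 * A ≤ E := by nlinarith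
  -- main bound via base-4 expansion
  have main : ∀ k : ℕ, ∀ n : ℕ, 1 ≤ n → n < 4 ^ (k+1) → b n ≤ Real.exp (E * γ ^ k) := by
    intro k
    induction k with
    | zero =>
      intro n hn1 hn4
      have hb1n : b n ≤ b 1 ^ n := by
        have := hbpow n 1 hn1 le_rfl
        simpa using this
      have hb1e : b 1 ≤ Real.exp A := by
        have := key' 0
        simpa using this
      calc b n ≤ b 1 ^ n := hb1n
        _ ≤ (Real.exp A) ^ n := pow_le_pow_left₀ (hb0 1).le hb1e n
        _ = Real.exp ((n:ℝ) * A) := (Real.exp_nat_mul _ _).symm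
        _ ≤ Real.exp (E * γ ^ 0) := by
            apply Real.exp_le_exp.2
            rw [pow_zero, mul_one]
            have hn3 : (n:ℝ) ≤ 3 := by exact_mod_cast Nat.lt_succ_iff.1 hn4
            nlinarith
    | succ k ih =>
      intro n hn1 hn4
      by_cases hsmall : n < 4 ^ (k+1)
      · refine le_trans (ih n hn1 hsmall) (Real.exp_le_exp.2 ?_)
        have : γ ^ k ≤ γ ^ (k+1) := pow_le_pow_right₀ hγ1.le (Nat.le_succ k)
        nlinarith
      · push_neg at hsmall
        set m : ℕ := 4 ^ (k+1) with hm
        have hm1 : 1 ≤ m := Nat.one_le_pow _ _ (by norm_num)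
        set d : ℕ := n / m with hd
        set r : ℕ := n % m with hr
        have hd1 : 1 ≤ d := (Nat.one_le_div_iff (by omega)).2 hsmall
        have hd3 : d ≤ 3 := by
          have : n < 4 * m := by
            have : (4:ℕ) ^ (k+1+1) = 4 * 4 ^ (k+1) := by ring
            omega
          have := Nat.div_lt_iff_lt_mul (show 0 < m by omega) |>.2 (by omega : n < 4 * m)
          omega
        have hnd : d * m + r = n := by
          rw [hd, hr, mul_comm]; exact Nat.div_add_mod n m
        have hbmd : b m ^ d ≤ Real.exp (3 * (A * γ ^ (k+1))) := by
          calc b m ^ d ≤ (Real.exp (A * γ ^ (k+1))) ^ d :=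
                pow_le_pow_left₀ (hb0 m).le (key' (k+1)) d
            _ = Real.exp ((d:ℝ) * (A * γ ^ (k+1))) := (Real.exp_nat_mul _ _).symm
            _ ≤ Real.exp (3 * (A * γ ^ (k+1))) := by
                apply Real.exp_le_exp.2
                have hd3' : (d:ℝ) ≤ 3 := by exact_mod_cast hd3
                have : (0:ℝ) ≤ A * γ ^ (k+1) := by positivity
                nlinarith
        have harith : 3 * (A * γ ^ (k+1)) + E * γ ^ k = E * γ ^ (k+1) := by
          rw [pow_succ]
          linear_combination (-(γ ^ k)) * hE1
        rcases Nat.eq_zero_or_pos r with hr0 | hr1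
        · have hndm : n = d * m := by omega
          rw [hndm]
          refine le_trans (hbpow d m hd1 hm1) (le_trans hbmd (Real.exp_le_exp.2 ?_))
          have h1 : (0:ℝ) ≤ E * γ ^ k := by positivity
          linarith [harith]
        · have hrm : r < m := Nat.mod_lt n (by omega)
          have hbr : b r ≤ Real.exp (E * γ ^ k) := ih r hr1 hrm
          calc b n = b (d * m + r) := by rw [hnd]
            _ ≤ b (d * m) * b r := hbsub _ _ (Nat.mul_pos hd1 hm1) hr1
            _ ≤ b m ^ d * b r :=
                mul_le_mul_of_nonneg_right (hbpow d m hd1 hm1) (hb0 r).le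
            _ ≤ Real.exp (3 * (A * γ ^ (k+1))) * Real.exp (E * γ ^ k) :=
                mul_le_mul hbmd hbr (hb0 r).le (Real.exp_pos _).le
            _ = Real.exp (3 * (A * γ ^ (k+1)) + E * γ ^ k) := (Real.exp_add _ _).symm
            _ = Real.exp (E * γ ^ (k+1)) := by rw [harith]
  -- bound by exp(E * n^α)
  have h4α : (4:ℝ) ^ α = γ := by
    rw [Real.rpow_def_of_pos (by norm_num : (0:ℝ) < 4), hα, mul_comm,
      div_mul_cancel₀ _ hlog4.ne', Real.exp_log hγ0]
  have hbound : ∀ n : ℕ, 1 ≤ n → b n ≤ Real.exp (E * (n:ℝ) ^ α) := by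
    intro n hn
    set k : ℕ := Nat.log 4 n with hk
    have h1 : 4 ^ k ≤ n := Nat.pow_log_le_self 4 (by omega)
    have h2 : n < 4 ^ (k+1) := Nat.lt_pow_succ_log_self (by norm_num) n
    refine le_trans (main k n hn h2) (Real.exp_le_exp.2 ?_)
    have hγk : γ ^ k = ((4:ℝ) ^ k) ^ α := by
      rw [← h4α, ← Real.rpow_natCast ((4:ℝ) ^ α) k, ← Real.rpow_natCast (4:ℝ) k,
        ← Real.rpow_mul (by norm_num : (0:ℝ) ≤ 4), ← Real.rpow_mul (by norm_num : (0:ℝ) ≤ 4),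
        mul_comm]
    rw [hγk]
    apply mul_le_mul_of_nonneg_left _ hEpos.le
    apply Real.rpow_le_rpow (by positivity) _ hα0
    exact_mod_cast h1
  -- conclude
  have hτα : 0 < τ - α := sub_pos.2 hτ
  set N : ℝ := max 1 (E ^ (1 / (τ - α))) with hN
  have hN1 : (1:ℝ) ≤ N := le_max_left _ _
  set C : ℝ := Real.exp (E * N ^ α) with hC
  have hCpos : 0 < C := Real.exp_pos _
  have hC1 : (1:ℝ) ≤ C :=
    Real.one_le_exp (mul_nonneg hEpos.le (Real.rpow_nonneg (by linarith) α))
  refine ⟨C, hCpos, ?_⟩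
  intro n hn
  have hn1 : (1:ℝ) ≤ (n:ℝ) := by exact_mod_cast hn
  have hnτ : (0:ℝ) ≤ (n:ℝ) ^ τ := Real.rpow_nonneg (by linarith) τ
  by_cases hcase : (n:ℝ) ≤ N
  · have h1 : (n:ℝ) ^ α ≤ N ^ α := Real.rpow_le_rpow (by linarith) hcase hα0
    calc b n ≤ Real.exp (E * (n:ℝ) ^ α) := hbound n hn
      _ ≤ Real.exp (E * N ^ α) := Real.exp_le_exp.2 (by nlinarith)
      _ = C := hC.symm
      _ ≤ C * Real.exp ((n:ℝ) ^ τ) := le_mul_of_one_le_right hCpos.le (Real.one_le_exp hnτ)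
  · push_neg at hcase
    have hEn : E ≤ (n:ℝ) ^ (τ - α) := by
      have h1 : E ^ (1 / (τ - α)) ≤ (n:ℝ) := le_trans (le_max_right _ _) hcase.le
      have h2 : (E ^ (1 / (τ - α))) ^ (τ - α) ≤ (n:ℝ) ^ (τ - α) :=
        Real.rpow_le_rpow (Real.rpow_nonneg hEpos.le _) h1 hτα.le
      rwa [← Real.rpow_mul hEpos.le, one_div_mul_cancel hτα.ne', Real.rpow_one] at h2
    have hsum : (n:ℝ) ^ (τ - α) * (n:ℝ) ^ α = (n:ℝ) ^ τ := by
      rw [← Real.rpow_add (by linarith : (0:ℝ) < n)]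
      ring_nf
    have h2 : E * (n:ℝ) ^ α ≤ (n:ℝ) ^ τ := by
      rw [← hsum]
      exact mul_le_mul_of_nonneg_right hEn (Real.rpow_nonneg (by linarith) α)
    calc b n ≤ Real.exp (E * (n:ℝ) ^ α) := hbound n hn
      _ ≤ Real.exp ((n:ℝ) ^ τ) := Real.exp_le_exp.2 h2
      _ ≤ C * Real.exp ((n:ℝ) ^ τ) :=
          le_mul_of_one_le_left (Real.exp_pos _).le hC1

/-- Submultiplicative sequence with `a (4n) ≤ n * a n ^ γ` grows at most like
`e^(n^τ)` for every `τ > log₄ γ`. -/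
theorem stmt_0 (γ : ℝ) (hγ1 : 1 < γ) (hγ4 : γ < 4) (a : ℕ → ℝ)
    (hpos : ∀ n, 1 ≤ n → 0 ≤ a n)
    (hsub : ∀ n m, 1 ≤ n → 1 ≤ m → a (n + m) ≤ a n * a m)
    (h4 : ∀ n, 1 ≤ n → a (4 * n) ≤ (n : ℝ) * a n ^ γ) :
    ∀ τ : ℝ, Real.log γ / Real.log 4 < τ →
      ∃ C > 0, ∀ n, 1 ≤ n → a n ≤ C * Real.exp ((n : ℝ) ^ τ) := by
  have hγ0 : (0:ℝ) < γ := lt_trans one_pos hγ1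
  set b : ℕ → ℝ := fun n => max (a n) 1 with hb
  have hb1 : ∀ n, 1 ≤ b n := fun n => le_max_right _ _
  have hb0 : ∀ n, (0:ℝ) < b n := fun n => lt_of_lt_of_le one_pos (hb1 n)
  have hab : ∀ n, 1 ≤ n → a n ≤ b n := fun n _ => le_max_left _ _
  have hbsub : ∀ n m, 1 ≤ n → 1 ≤ m → b (n + m) ≤ b n * b m := by
    intro n m hn hm
    have h1 : a (n + m) ≤ b n * b m := by
      refine le_trans (hsub n m hn hm) ?_
      exact mul_le_mul (hab n hn) (hab m hm) (hpos m hm) (hb0 n).le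
    have h2 : (1:ℝ) ≤ b n * b m := one_le_mul_of_one_le_of_one_le (hb1 n) (hb1 m)
    exact max_le h1 h2
  have hb4 : ∀ n, 1 ≤ n → b (4 * n) ≤ (n : ℝ) * b n ^ γ := by
    intro n hn
    have hn1 : (1:ℝ) ≤ (n:ℝ) := by exact_mod_cast hn
    have h1 : a (4 * n) ≤ (n:ℝ) * b n ^ γ := by
      refine le_trans (h4 n hn) ?_
      apply mul_le_mul_of_nonneg_left _ (by linarith)
      exact Real.rpow_le_rpow (hpos n hn) (hab n hn) hγ0.le
    have h2 : (1:ℝ) ≤ (n:ℝ) * b n ^ γ := by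
      have : (1:ℝ) ≤ b n ^ γ := by
        calc (1:ℝ) = 1 ^ γ := (Real.one_rpow γ).symm
          _ ≤ b n ^ γ := Real.rpow_le_rpow (by norm_num) (hb1 n) hγ0.le
      nlinarith
    exact max_le h1 h2
  intro τ hτ
  obtain ⟨C, hCpos, hC⟩ := aux_grow γ hγ1 b hb1 hbsub hb4 τ hτ
  exact ⟨C, hCpos, fun n hn => le_trans (hab n hn) (hC n hn)⟩
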